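/- (Curvature greedy guarantee) Let L be a finite modular lattice, I ⊆ L a supermatroid of rank k, and f : L → ℝ a monotone bidirectional DR-submodular function with f(⊥) = 0 and curvature c ∈ [0,1], meaning f(X ∨ a) − f(X) ≥ (1 − c) f(a') for all X, admissible a w.r.t. X, and minimal join-irreducible a' ≤ a. Then the greedy algorithm, which at each step joins an admissible join-irreducible a maximizing f(X ∨ a) subject to X ∨ a ∈ I, outputs after k steps a solution X_k with f(X_k) ≥ (1 − c) f(X*) for any X* ∈ I. -/

import Mathlib

/-!
Exchange argument. Start from a basis `Y₀ ⊇ X*` of `𝓘`; along the greedy run keep a basis `Y` of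
height `k` containing the current solution `X i`. When the greedy step adds `a ≰ Y`, replace `Y` by
a basis `Y'` of `Y ⊔ a` containing `X (i + 1)`; DR-submodularity, the greedy choice and curvature
give `(1 - c) (f Y - f Y') ≤ c (f (X (i + 1)) - f (X i))`. Summing, `(1 - c) (f Y₀ - f Y) ≤ c f (X k)`
at the end, where `Y = X k` because both have height `k` (heights are additive along covers in a
modular lattice). Hence `(1 - c) f X* ≤ (1 - c) f Y₀ ≤ f (X k)`.
-/

/-- The height of an element: length of a maximal chain from the bottom. -/
noncomputable def ht {α : Type*} [Preorder α] (x : α) : ℕ := (Order.height x).toNat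

/-- A join-irreducible `a` is admissible with respect to `X` if `X ⊓ a ⋖ a`. -/
def Admissible {α : Type*} [Lattice α] (X a : α) : Prop := SupIrred a ∧ X ⊓ a ⋖ a

/-- Downward DR-submodularity. -/
def DownwardDR {α : Type*} [Lattice α] (f : α → ℝ) : Prop :=
  ∀ X Y b : α, X ≤ Y → Admissible Y b →
    ∃ b' : α, SupIrred b' ∧ Y ⊔ b' = Y ⊔ b ∧
      ∀ a : α, a ≤ b' → Admissible X a →
        f (Y ⊔ b) - f Y ≤ f (X ⊔ a) - f X

/-- Upward DR-submodularity: downward DR-submodularity on the order dual. -/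
def UpwardDR {α : Type*} [Lattice α] (f : α → ℝ) : Prop :=
  ∀ X Y b : α, Y ≤ X → InfIrred b → b ⋖ Y ⊔ b →
    ∃ b' : α, InfIrred b' ∧ Y ⊓ b' = Y ⊓ b ∧
      ∀ a : α, b' ≤ a → InfIrred a → a ⋖ X ⊔ a →
        f (Y ⊓ b) - f Y ≤ f (X ⊓ a) - f X

section Height

variable {α : Type*}

lemma height_lt_top_of_finite [Preorder α] [Finite α] (x : α) : Order.height x < ⊤ := by
  have := Fintype.ofFinite α
  refine (Order.height_le fun p _ => ?_).trans_lt (ENat.natCast_lt_top (Fintype.card α))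
  exact_mod_cast p.length_lt_card.le

lemma coe_ht [Preorder α] [Finite α] (x : α) : (ht x : ℕ∞) = Order.height x :=
  ENat.natCast_toNat (height_lt_top_of_finite x).ne

lemma ht_strictMono [Preorder α] [Finite α] : StrictMono (ht : α → ℕ) := fun x _ h => by
  exact_mod_cast (coe_ht x).trans_lt ((Order.height_strictMono h
    (height_lt_top_of_finite x)).trans_eq (coe_ht _).symm)

lemma ht_le_iff [Preorder α] [Finite α] {x : α} {n : ℕ} : ht x ≤ n ↔ ∀ y < x, ht y < n := by
  simp only [← Nat.cast_le (α := ℕ∞), ← Nat.cast_lt (α := ℕ∞), coe_ht, Order.height_le_coe_iff]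

lemma ht_bot [Preorder α] [OrderBot α] : ht (⊥ : α) = 0 := by
  simp [ht, Order.height_eq_zero.mpr isMin_bot]

lemma eq_of_le_of_ht_eq [PartialOrder α] [Finite α] {x y : α} (h : x ≤ y) (hxy : ht x = ht y) :
    x = y :=
  h.eq_of_not_lt fun hlt => (ht_strictMono hlt).ne hxy

lemma covBy_of_ht_eq_add_one [Preorder α] [Finite α] {x y : α} (h : x < y)
    (hxy : ht y = ht x + 1) : x ⋖ y :=
  ⟨h, fun _ hxz hzy => by have := ht_strictMono hxz; have := ht_strictMono hzy; omega⟩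

-- Jordan–Dedekind: two distinct lower covers `x, a` of `b` cover `x ⊓ a` (lower semimodularity),
-- so by induction on `ht b` all lower covers of `b` have the same height.
lemma CovBy.ht_eq_ht_add_one [Lattice α] [Finite α] [IsLowerModularLattice α] {a b : α}
    (h : a ⋖ b) : ht b = ht a + 1 := by
  induction hn : ht b using Nat.strong_induction_on generalizing a b with
  | _ n ih =>
  have hcov : ∀ x, x ⋖ b → ht x = ht a := by
    intro x hx
    obtain rfl | hxa := eq_or_ne x a
    · rfl
    have hsup : x ⊔ a = b := hx.wcovBy.sup_eq h.wcovBy hxa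
    have hxa' : x ⊓ a ⋖ a := inf_covBy_of_covBy_sup_left (hsup ▸ hx)
    have hax' : x ⊓ a ⋖ x := inf_comm a x ▸ inf_covBy_of_covBy_sup_left (sup_comm x a ▸ hsup ▸ h)
    rw [ih _ (hn ▸ ht_strictMono hx.lt) hax' rfl, ih _ (hn ▸ ht_strictMono h.lt) hxa' rfl]
  refine hn ▸ le_antisymm (ht_le_iff.mpr fun y hy => ?_) (ht_strictMono h.lt)
  obtain ⟨x, hyx, hx⟩ := exists_le_covBy_of_lt hy
  exact Nat.lt_succ_of_le (hcov x hx ▸ ht_strictMono.monotone hyx)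

lemma ht_of_forall_covBy [Lattice α] [Finite α] [IsLowerModularLattice α] {X : ℕ → α} {n : ℕ}
    (hX : ∀ i < n, X i ⋖ X (i + 1)) : ht (X n) = ht (X 0) + n := by
  induction n with
  | zero => rfl
  | succ n ih =>
    rw [(hX n n.lt_succ_self).ht_eq_ht_add_one, ih fun i hi => hX i (hi.trans n.lt_succ_self)]
    rfl

end Height

section Lattice

variable {α : Type*} [Lattice α]

lemma CovBy.sup_eq_of_le_of_not_le {a b c : α} (h : a ⋖ b) (hcb : c ≤ b) (hca : ¬ c ≤ a) :
    a ⊔ c = b :=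
  (h.eq_or_eq le_sup_left (sup_le h.le hcb)).resolve_left fun hac => hca (sup_eq_left.mp hac)

lemma CovBy.inf_covBy_of_covBy [IsLowerModularLattice α] {a b c : α} (ha : a ⋖ c) (hb : b ⋖ c)
    (hab : a ≠ b) : a ⊓ b ⋖ b :=
  inf_covBy_of_covBy_sup_left (ha.wcovBy.sup_eq hb.wcovBy hab ▸ ha)

lemma IsAtom.supIrred [OrderBot α] {a : α} (ha : IsAtom a) : SupIrred a := by
  refine ⟨fun hmin => ha.1 hmin.eq_bot, fun b c hbc => ?_⟩
  rcases ha.le_iff.mp (hbc ▸ le_sup_left : b ≤ a) with rfl | hb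
  · exact Or.inr (by rwa [bot_sup_eq] at hbc)
  · exact Or.inl hb

lemma isAtom_of_minimal_supIrred_le [OrderBot α] [IsAtomic α] {o t : α}
    (ho : Minimal (fun z => SupIrred z ∧ z ≤ t) o) : IsAtom o := by
  obtain ⟨u, hu, huo⟩ := (eq_bot_or_exists_atom_le o).resolve_left ho.prop.1.ne_bot
  exact ho.eq_of_le ⟨hu.supIrred, huo.trans ho.prop.2⟩ huo ▸ hu

end Lattice

namespace Admissible

variable {α : Type*} [Lattice α] {X Y a : α}

lemma not_le (ha : Admissible X a) : ¬ a ≤ X :=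
  fun h => ha.2.lt.ne (inf_eq_right.mpr h)

lemma covBy_sup [IsUpperModularLattice α] (ha : Admissible X a) : X ⋖ X ⊔ a :=
  covBy_sup_of_inf_covBy_right ha.2

lemma of_le (ha : Admissible X a) (hXY : X ≤ Y) (haY : ¬ a ≤ Y) : Admissible Y a := by
  refine ⟨ha.1, ?_⟩
  have hYa : Y ⊓ a < a := inf_le_right.lt_of_ne fun h => haY (h ▸ inf_le_left)
  obtain h | h := (inf_le_inf_right a hXY).lt_or_eq
  · exact absurd hYa (ha.2.2 h)
  · exact h ▸ ha.2

end Admissible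

section Admissible

variable {α : Type*} [Lattice α] {X a : α}

lemma admissible_of_covBy_sup [IsLowerModularLattice α] (ha : SupIrred a) (h : X ⋖ X ⊔ a) :
    Admissible X a :=
  ⟨ha, inf_covBy_of_covBy_sup_left h⟩

lemma admissible_bot_of_isAtom [OrderBot α] (ha : IsAtom a) : Admissible ⊥ a :=
  ⟨ha.supIrred, by rw [bot_inf_eq]; exact bot_covBy_iff.mpr ha⟩

lemma admissible_of_minimal_not_le (ha : Minimal (fun w => ¬ w ≤ X) a) : Admissible X a := by
  have below : ∀ w < a, w ≤ X := fun w hw => by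
    by_contra hwX
    exact hw.not_ge (ha.2 hwX hw.le)
  refine ⟨⟨fun hmin => ha.prop (hmin inf_le_left |>.trans inf_le_right), fun b c hbc => ?_⟩,
    inf_le_right.lt_of_ne fun h => ha.prop (h ▸ inf_le_left),
    fun w hXw hwa => (hXw.not_ge (le_inf (below w hwa) hwa.le))⟩
  by_contra! hne
  exact ha.prop (hbc ▸ sup_le (below b ((hbc ▸ le_sup_left).lt_of_ne hne.1))
    (below c ((hbc ▸ le_sup_right).lt_of_ne hne.2)))

lemma exists_admissible_le [WellFoundedLT α] {t : α} (ht : ¬ t ≤ X) :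
    ∃ s ≤ t, Admissible X s := by
  obtain ⟨s, hst, hs⟩ := exists_minimal_le_of_wellFoundedLT (fun w => ¬ w ≤ X) t ht
  exact ⟨s, hst, admissible_of_minimal_not_le hs⟩

end Admissible

def HasCurvatureLE {α : Type*} [Lattice α] (f : α → ℝ) (c : ℝ) : Prop :=
  ∀ X a a' : α, Admissible X a → Minimal (fun z => SupIrred z ∧ z ≤ a) a' →
    (1 - c) * f a' ≤ f (X ⊔ a) - f X

namespace DownwardDR

variable {α : Type*} [Lattice α] [WellFoundedLT α] {f : α → ℝ}

lemma exists_admissible_gain_ge (hdown : DownwardDR f) {X M Y : α} (hXM : X ≤ M) (hMY : M ⋖ Y) :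
    ∃ a ≤ Y, Admissible X a ∧ f Y - f M ≤ f (X ⊔ a) - f X := by
  obtain ⟨z, hzY, hz⟩ := exists_admissible_le hMY.lt.not_ge
  have hMz : M ⊔ z = Y := hMY.sup_eq_of_le_of_not_le hzY hz.not_le
  obtain ⟨z', -, hMz', hgain⟩ := hdown X M z hXM hz
  rw [hMz] at hMz' hgain
  have hz'X : ¬ z' ≤ X := fun h => hMY.lt.ne (hMz' ▸ (sup_eq_left.mpr (h.trans hXM)).symm)
  obtain ⟨a, haz', ha⟩ := exists_admissible_le hz'X
  exact ⟨a, haz'.trans (hMz' ▸ le_sup_right), ha, hgain a haz' ha⟩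

-- Downward DR at `⊥` bounds the gain of `a` at `X` by `f o` for an atom `o` below some
-- `a' ≡ a mod X`, and curvature at `M` bounds `(1 - c) f o` by the gain of `a' ≡ a mod M`.
lemma one_sub_mul_gain_le_gain [OrderBot α] [IsModularLattice α] (hdown : DownwardDR f)
    (hbot : f ⊥ = 0) {c : ℝ} (hc1 : c ≤ 1) (hcurv : HasCurvatureLE f c) {X M a : α}
    (hXM : X ≤ M) (ha : Admissible X a) (haM : ¬ a ≤ M) :
    (1 - c) * (f (X ⊔ a) - f X) ≤ f (M ⊔ a) - f M := by
  obtain ⟨a', ha'irr, hXa', hgain⟩ := hdown ⊥ X a bot_le ha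
  obtain ⟨o, -, ho⟩ :=
    exists_minimal_le_of_wellFoundedLT (fun z => SupIrred z ∧ z ≤ a') a' ⟨ha'irr, le_rfl⟩
  have hgain_o : f (X ⊔ a) - f X ≤ f o := by
    simpa [hbot] using hgain o ho.prop.2 (admissible_bot_of_isAtom (isAtom_of_minimal_supIrred_le ho))
  have hMa' : M ⊔ a' = M ⊔ a := by
    rw [← sup_eq_left.mpr hXM, sup_assoc, hXa', ← sup_assoc]
  have ha'M : Admissible M a' :=
    admissible_of_covBy_sup ha'irr (hMa' ▸ (ha.of_le hXM haM).covBy_sup)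
  calc (1 - c) * (f (X ⊔ a) - f X) ≤ (1 - c) * f o :=
        mul_le_mul_of_nonneg_left hgain_o (sub_nonneg.mpr hc1)
    _ ≤ f (M ⊔ a) - f M := hMa' ▸ hcurv M a' o ha'M ho

end DownwardDR

section Supermatroid

variable {α : Type*} [Lattice α] [Finite α] {𝓘 : Set α} {k : ℕ}

lemma ht_le_of_mem (hrank : ∀ B : α, Maximal (· ∈ 𝓘) B → ht B = k) {J : α} (hJ : J ∈ 𝓘) :
    ht J ≤ k := by
  obtain ⟨B, hJB, hB⟩ := Finite.exists_le_maximal hJ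
  exact hrank B hB ▸ ht_strictMono.monotone hJB

-- `W` has height `k + 1`, so it is not independent and `Y` is a basis of `W`; a basis `Y'` of `W`
-- through `Z` then also has height `k`, hence is a second lower cover of `W`.
lemma exists_exchange_of_covBy [IsModularLattice α]
    (hH2 : ∀ X I₁ I₂ : α, Maximal (fun J => J ∈ 𝓘 ∧ J ≤ X) I₁ →
      Maximal (fun J => J ∈ 𝓘 ∧ J ≤ X) I₂ → ht I₁ = ht I₂)
    (hrank : ∀ B : α, Maximal (· ∈ 𝓘) B → ht B = k)
    {Y W Z : α} (hY : Y ∈ 𝓘) (hYk : ht Y = k) (hYW : Y ⋖ W) (hZ : Z ∈ 𝓘) (hZW : Z ≤ W)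
    (hZY : ¬ Z ≤ Y) :
    ∃ Y' ∈ 𝓘, Z ≤ Y' ∧ ht Y' = k ∧ Y ⊓ Y' ⋖ Y ∧ Y ⊓ Y' ⋖ Y' := by
  have hWk : ht W = k + 1 := hYk ▸ hYW.ht_eq_ht_add_one
  have hW : W ∉ 𝓘 := fun hW => by have := ht_le_of_mem hrank hW; omega
  have hYmax : Maximal (fun J => J ∈ 𝓘 ∧ J ≤ W) Y := ⟨⟨hY, hYW.le⟩, fun J hJ hYJ =>
    ((hYW.eq_or_eq hYJ hJ.2).resolve_right fun h => hW (h ▸ hJ.1)).le⟩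
  obtain ⟨Y', hZY', hY'max⟩ := Finite.exists_le_maximal (p := fun J => J ∈ 𝓘 ∧ J ≤ W) ⟨hZ, hZW⟩
  have hY'k : ht Y' = k := hYk ▸ hH2 W Y' Y hY'max hYmax
  have hY'W : Y' ⋖ W := covBy_of_ht_eq_add_one
    (hY'max.prop.2.lt_of_ne fun h => hW (h ▸ hY'max.prop.1)) (by omega)
  have hYY' : Y ≠ Y' := fun h => hZY (h ▸ hZY')
  exact ⟨Y', hY'max.prop.1, hZY', hY'k, inf_comm Y' Y ▸ hY'W.inf_covBy_of_covBy hYW hYY'.symm,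
    hYW.inf_covBy_of_covBy hY'W hYY'⟩

end Supermatroid

-- When `a ≰ Y`, exchange `Y` for a basis `Y'` of `Y ⊔ a` through `X ⊔ a`. With `M = Y ⊓ Y'`, the
-- greedy choice bounds the loss `f Y - f M` by the greedy gain `Δ`, and curvature bounds the gain
-- `f Y' - f M = f (M ⊔ a) - f M` below by `(1 - c) Δ`; so `(1 - c) (f Y - f Y') ≤ c (1 - c) Δ`.
lemma exists_greedy_exchange {α : Type*} [Lattice α] [Finite α] [OrderBot α] [IsModularLattice α]
    {𝓘 : Set α} (hideal : IsLowerSet 𝓘)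
    (hH2 : ∀ X I₁ I₂ : α, Maximal (fun J => J ∈ 𝓘 ∧ J ≤ X) I₁ →
      Maximal (fun J => J ∈ 𝓘 ∧ J ≤ X) I₂ → ht I₁ = ht I₂)
    {k : ℕ} (hrank : ∀ B : α, Maximal (· ∈ 𝓘) B → ht B = k)
    {f : α → ℝ} (hmono : Monotone f) (hbot : f ⊥ = 0) (hdown : DownwardDR f)
    {c : ℝ} (hc0 : 0 ≤ c) (hc1 : c ≤ 1) (hcurv : HasCurvatureLE f c)
    {X Y a : α} (hY : Y ∈ 𝓘) (hYk : ht Y = k) (hXY : X ≤ Y) (ha : Admissible X a)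
    (haI : X ⊔ a ∈ 𝓘) (hopt : ∀ b, Admissible X b → X ⊔ b ∈ 𝓘 → f (X ⊔ b) ≤ f (X ⊔ a)) :
    ∃ Y' ∈ 𝓘, X ⊔ a ≤ Y' ∧ ht Y' = k ∧ (1 - c) * (f Y - f Y') ≤ c * (f (X ⊔ a) - f X) := by
  have hΔ : 0 ≤ f (X ⊔ a) - f X := sub_nonneg.mpr (hmono le_sup_left)
  by_cases haY : a ≤ Y
  · exact ⟨Y, hY, sup_le hXY haY, hYk, by simpa using mul_nonneg hc0 hΔ⟩
  obtain ⟨Y', hY', hXaY', hY'k, hMY, hMY'⟩ := exists_exchange_of_covBy hH2 hrank hY hYk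
    (ha.of_le hXY haY).covBy_sup haI (sup_le_sup_right hXY a) fun h => haY (le_sup_right.trans h)
  have hXM : X ≤ Y ⊓ Y' := le_inf hXY (le_sup_left.trans hXaY')
  obtain ⟨a₁, ha₁Y, ha₁, hloss⟩ := hdown.exists_admissible_gain_ge hXM hMY
  have hopt₁ := hopt a₁ ha₁ (hideal (sup_le hXY ha₁Y) hY)
  have hMa : Y ⊓ Y' ⊔ a = Y' :=
    hMY'.sup_eq_of_le_of_not_le (le_sup_right.trans hXaY') fun h => haY (h.trans inf_le_left)
  have hgain := hMa ▸ hdown.one_sub_mul_gain_le_gain hbot hc1 hcurv hXM ha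
    fun h => haY (h.trans inf_le_left)
  refine ⟨Y', hY', hXaY', hY'k, ?_⟩
  nlinarith [mul_le_mul_of_nonneg_left (hloss.trans (sub_le_sub_right hopt₁ _))
    (sub_nonneg.mpr hc1), mul_nonneg hc0 hΔ, mul_nonneg (mul_nonneg hc0 hc0) hΔ]

theorem greedy_curvature_guarantee_general {α : Type*} [Lattice α] [Fintype α]
    [BoundedOrder α] [IsModularLattice α]
    (𝓘 : Set α) (hideal : IsLowerSet 𝓘)
    (hH2 : ∀ X I₁ I₂ : α, Maximal (fun J => J ∈ 𝓘 ∧ J ≤ X) I₁ →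
        Maximal (fun J => J ∈ 𝓘 ∧ J ≤ X) I₂ → ht I₁ = ht I₂)
    (k : ℕ) (hrank : ∀ B : α, Maximal (· ∈ 𝓘) B → ht B = k)
    (f : α → ℝ) (hmono : Monotone f) (hbot : f ⊥ = 0)
    (hdown : DownwardDR f)
    (c : ℝ) (hc0 : 0 ≤ c) (hc1 : c ≤ 1)
    (hcurv : ∀ X a a' : α, Admissible X a →
        Minimal (fun z => SupIrred z ∧ z ≤ a) a' →
        (1 - c) * f a' ≤ f (X ⊔ a) - f X)
    (X : ℕ → α) (hX0 : X 0 = ⊥)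
    (hgreedy : ∀ i < k, ∃ a : α, Admissible (X i) a ∧ X i ⊔ a ∈ 𝓘 ∧
        X (i + 1) = X i ⊔ a ∧
        ∀ b : α, Admissible (X i) b → X i ⊔ b ∈ 𝓘 → f (X i ⊔ b) ≤ f (X (i + 1))) :
    ∀ Xstar ∈ 𝓘, (1 - c) * f Xstar ≤ f (X k) := by
  intro Xstar hXstar
  obtain ⟨Y₀, hXY₀, hY₀⟩ := Finite.exists_le_maximal hXstar
  have hinv : ∀ i ≤ k, ∃ Y ∈ 𝓘, X i ≤ Y ∧ ht Y = k ∧ (1 - c) * (f Y₀ - f Y) ≤ c * f (X i) := by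
    intro i
    induction i with
    | zero => exact fun _ => ⟨Y₀, hY₀.prop, hX0 ▸ bot_le, hrank Y₀ hY₀, by simp [hX0, hbot]⟩
    | succ i ih =>
      intro hi
      obtain ⟨Y, hY, hXY, hYk, hloss⟩ := ih (by omega)
      obtain ⟨a, ha, haI, hstep, hopt⟩ := hgreedy i (by omega)
      rw [hstep] at hopt ⊢
      obtain ⟨Y', hY', hXY', hY'k, hexch⟩ := exists_greedy_exchange hideal hH2 hrank hmono hbot
        hdown hc0 hc1 hcurv hY hYk hXY ha haI hopt
      exact ⟨Y', hY', hXY', hY'k, by linarith⟩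
  obtain ⟨Y, -, hXY, hYk, hloss⟩ := hinv k le_rfl
  have hXk : ht (X k) = k := by
    rw [ht_of_forall_covBy fun i hi => ?_, hX0, ht_bot, zero_add]
    obtain ⟨a, ha, -, hstep, -⟩ := hgreedy i hi
    exact hstep ▸ ha.covBy_sup
  obtain rfl : X k = Y := eq_of_le_of_ht_eq hXY (hXk.trans hYk.symm)
  nlinarith [mul_le_mul_of_nonneg_left (hmono hXY₀) (sub_nonneg.mpr hc1)]

/-- Greedy guarantee under curvature: the greedy algorithm on a rank-`k` modular
supermatroid achieves a `(1 - c)`-approximation for a monotone bidirectional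
DR-submodular function with curvature `c`. -/
theorem greedy_curvature_guarantee {α : Type*} [Lattice α] [Fintype α]
    [BoundedOrder α] [IsModularLattice α]
    (𝓘 : Set α) (hne : 𝓘.Nonempty) (hideal : IsLowerSet 𝓘)
    (hH2 : ∀ X I₁ I₂ : α, Maximal (fun J => J ∈ 𝓘 ∧ J ≤ X) I₁ →
        Maximal (fun J => J ∈ 𝓘 ∧ J ≤ X) I₂ → ht I₁ = ht I₂)
    (k : ℕ) (hrank : ∀ B : α, Maximal (· ∈ 𝓘) B → ht B = k)
    (f : α → ℝ) (hmono : Monotone f) (hbot : f ⊥ = 0)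
    (hdown : DownwardDR f) (hup : UpwardDR f)
    (c : ℝ) (hc0 : 0 ≤ c) (hc1 : c ≤ 1)
    (hcurv : ∀ X a a' : α, Admissible X a →
        Minimal (fun z => SupIrred z ∧ z ≤ a) a' →
        (1 - c) * f a' ≤ f (X ⊔ a) - f X)
    (X : ℕ → α) (hX0 : X 0 = ⊥)
    (hgreedy : ∀ i < k, ∃ a : α, Admissible (X i) a ∧ X i ⊔ a ∈ 𝓘 ∧
        X (i + 1) = X i ⊔ a ∧
        ∀ b : α, Admissible (X i) b → X i ⊔ b ∈ 𝓘 → f (X i ⊔ b) ≤ f (X (i + 1))) :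
    ∀ Xstar ∈ 𝓘, (1 - c) * f Xstar ≤ f (X k) :=
  greedy_curvature_guarantee_general 𝓘 hideal hH2 k hrank f hmono hbot hdown c hc0 hc1 hcurv X hX0
    hgreedy
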